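/- If $f:\mathbb{R}^d \to (0,+\infty)$ is log-convex, then for any $\varepsilon > 0$ the function $P^\varepsilon f$ is log-convex, where $P^\varepsilon$ is the Ornstein–Uhlenbeck semigroup. That is, $x \mapsto \log \int f(y + e^{-\varepsilon/2}x)\, e^{-|y|^2/(2(1-e^{-\varepsilon}))}\,dy$ is convex. -/
import Mathlib


open MeasureTheory Real

variable {d : ℕ}

/-- The Ornstein–Uhlenbeck semigroup at time `ε`. -/
noncomputable def OU (d : ℕ) (ε : ℝ) (f : EuclideanSpace ℝ (Fin d) → ℝ)
    (x : EuclideanSpace ℝ (Fin d)) : ℝ :=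
  (2 * π * (1 - Real.exp (-ε))) ^ (-(d : ℝ) / 2) *
    ∫ y, f (y + Real.exp (-ε / 2) • x) * Real.exp (-‖y‖ ^ 2 / (2 * (1 - Real.exp (-ε))))

theorem stmt4 (d : ℕ) (ε : ℝ) (hε : 0 < ε) (f : EuclideanSpace ℝ (Fin d) → ℝ)
    (hfpos : ∀ x, 0 < f x)
    (hlogconv : ConvexOn ℝ Set.univ (fun x => Real.log (f x)))
    (hint : ∀ x, Integrable (fun y => f (y + Real.exp (-ε / 2) • x) *
      Real.exp (-‖y‖ ^ 2 / (2 * (1 - Real.exp (-ε)))))) :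
    ConvexOn ℝ Set.univ (fun x => Real.log (OU d ε f x)) := by
  set e : ℝ := Real.exp (-ε / 2) with he
  set w : EuclideanSpace ℝ (Fin d) → ℝ :=
    fun y => Real.exp (-‖y‖ ^ 2 / (2 * (1 - Real.exp (-ε)))) with hw
  set g : EuclideanSpace ℝ (Fin d) → EuclideanSpace ℝ (Fin d) → ℝ :=
    fun x y => f (y + e • x) * w y with hg
  set I : EuclideanSpace ℝ (Fin d) → ℝ := fun x => ∫ y, g x y with hI
  have hgpos : ∀ x y, 0 < g x y := fun x y =>
    mul_pos (hfpos _) (Real.exp_pos _)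
  have hIpos : ∀ x, 0 < I x := by
    intro x
    rw [hI]
    rw [integral_pos_iff_support_of_nonneg (fun y => (hgpos x y).le) (hint x)]
    have : Function.support (g x) = Set.univ := by
      ext y; simp [Function.mem_support, (hgpos x y).ne']
    rw [this]
    simpa using (MeasureTheory.Measure.measure_univ_pos (μ := (volume : Measure (EuclideanSpace ℝ (Fin d))))).mpr
      (NeZero.ne _)
  have hIof : ∀ x, ENNReal.ofReal (I x) = ∫⁻ y, ENNReal.ofReal (g x y) := fun x =>
    MeasureTheory.ofReal_integral_eq_lintegral_ofReal (hint x)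
      (Filter.Eventually.of_forall fun y => (hgpos x y).le)
  -- the key multiplicative inequality, via Hölder
  have key : ∀ x z : EuclideanSpace ℝ (Fin d), ∀ a b : ℝ, 0 < a → 0 < b → a + b = 1 →
      I (a • x + b • z) ≤ I x ^ a * I z ^ b := by
    intro x z a b ha hb hab
    -- pointwise inequality
    have hpt : ∀ y, g (a • x + b • z) y ≤ g x y ^ a * g z y ^ b := by
      intro y
      have harg : y + e • (a • x + b • z) = a • (y + e • x) + b • (y + e • z) := by
        have h1 : a • (y + e • x) + b • (y + e • z)
            = (a + b) • y + e • (a • x + b • z) := by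
          simp only [smul_add, smul_smul, add_smul]
          rw [mul_comm a e, mul_comm b e, ← smul_smul, ← smul_smul]
          abel
        rw [h1, hab, one_smul]
      have hf_ineq : f (y + e • (a • x + b • z)) ≤ f (y + e • x) ^ a * f (y + e • z) ^ b := by
        rw [harg]
        have := hlogconv.2 (Set.mem_univ (y + e • x)) (Set.mem_univ (y + e • z))
          ha.le hb.le hab
        simp only [smul_eq_mul] at this
        calc f (a • (y + e • x) + b • (y + e • z))
            = Real.exp (Real.log (f (a • (y + e • x) + b • (y + e • z)))) :=
              (Real.exp_log (hfpos _)).symm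
          _ ≤ Real.exp (a * Real.log (f (y + e • x)) + b * Real.log (f (y + e • z))) :=
              Real.exp_le_exp.mpr this
          _ = f (y + e • x) ^ a * f (y + e • z) ^ b := by
              rw [Real.exp_add, Real.rpow_def_of_pos (hfpos _), Real.rpow_def_of_pos (hfpos _)]
              ring_nf
      have hwsplit : w y = w y ^ a * w y ^ b := by
        rw [← Real.rpow_add (Real.exp_pos _), hab, Real.rpow_one]
      calc g (a • x + b • z) y = f (y + e • (a • x + b • z)) * w y := rfl
        _ ≤ (f (y + e • x) ^ a * f (y + e • z) ^ b) * (w y ^ a * w y ^ b) := by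
            rw [← hwsplit]
            exact mul_le_mul_of_nonneg_right hf_ineq (Real.exp_pos _).le
        _ = g x y ^ a * g z y ^ b := by
            rw [hg]
            dsimp only
            rw [Real.mul_rpow (hfpos _).le (Real.exp_pos _).le,
              Real.mul_rpow (hfpos _).le (Real.exp_pos _).le]
            ring
    -- move to ENNReal and apply Hölder
    have meas : ∀ x, AEMeasurable (fun y => ENNReal.ofReal (g x y)) volume := fun x =>
      (hint x).aestronglyMeasurable.aemeasurable.ennreal_ofReal
    have main : ENNReal.ofReal (I (a • x + b • z)) ≤ ENNReal.ofReal (I x ^ a * I z ^ b) := by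
      rw [hIof]
      calc (∫⁻ y, ENNReal.ofReal (g (a • x + b • z) y))
          ≤ ∫⁻ y, ENNReal.ofReal (g x y) ^ a * ENNReal.ofReal (g z y) ^ b := by
            refine lintegral_mono fun y => ?_
            rw [ENNReal.ofReal_rpow_of_pos (hgpos x y),
              ENNReal.ofReal_rpow_of_pos (hgpos z y),
              ← ENNReal.ofReal_mul (Real.rpow_nonneg (hgpos x y).le a)]
            exact ENNReal.ofReal_le_ofReal (hpt y)
        _ ≤ (∫⁻ y, ENNReal.ofReal (g x y)) ^ a * (∫⁻ y, ENNReal.ofReal (g z y)) ^ b :=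
            ENNReal.lintegral_mul_norm_pow_le (meas x) (meas z) ha.le hb.le hab
        _ = ENNReal.ofReal (I x ^ a * I z ^ b) := by
            rw [← hIof, ← hIof, ENNReal.ofReal_rpow_of_pos (hIpos x),
              ENNReal.ofReal_rpow_of_pos (hIpos z),
              ← ENNReal.ofReal_mul (Real.rpow_nonneg (hIpos x).le a)]
    exact (ENNReal.ofReal_le_ofReal_iff (mul_pos (Real.rpow_pos_of_pos (hIpos x) a) (Real.rpow_pos_of_pos (hIpos z) b)).le).mp main
  -- assemble: OU = C * I with C > 0
  have hC : (0:ℝ) < (2 * π * (1 - Real.exp (-ε))) ^ (-(d : ℝ) / 2) := by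
    apply Real.rpow_pos_of_pos
    have h1 : Real.exp (-ε) < 1 := by
      rw [Real.exp_lt_one_iff]; linarith
    have := Real.pi_pos
    nlinarith
  have hOU : ∀ x, OU d ε f x = (2 * π * (1 - Real.exp (-ε))) ^ (-(d : ℝ) / 2) * I x :=
    fun x => rfl
  refine convexOn_iff_forall_pos.mpr ⟨convex_univ, fun x _ z _ a b ha hb hab => ?_⟩
  simp only [hOU, smul_eq_mul]
  rw [Real.log_mul hC.ne' (hIpos _).ne', Real.log_mul hC.ne' (hIpos x).ne',
    Real.log_mul hC.ne' (hIpos z).ne']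
  have hlog : Real.log (I (a • x + b • z)) ≤ a * Real.log (I x) + b * Real.log (I z) := by
    calc Real.log (I (a • x + b • z)) ≤ Real.log (I x ^ a * I z ^ b) :=
          Real.log_le_log (hIpos _) (key x z a b ha hb hab)
      _ = a * Real.log (I x) + b * Real.log (I z) := by
          rw [Real.log_mul (Real.rpow_pos_of_pos (hIpos x) a).ne' (Real.rpow_pos_of_pos (hIpos z) b).ne',
            Real.log_rpow (hIpos x), Real.log_rpow (hIpos z)]
  have hL : a * Real.log ((2 * π * (1 - Real.exp (-ε))) ^ (-(d : ℝ) / 2))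
      + b * Real.log ((2 * π * (1 - Real.exp (-ε))) ^ (-(d : ℝ) / 2))
      = Real.log ((2 * π * (1 - Real.exp (-ε))) ^ (-(d : ℝ) / 2)) := by
    rw [← add_mul, hab, one_mul]
  linarith [hlog]
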